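/- Suppose both T_L and T_R contain a pair. Then for every feasible 2-MST solution, with blue tree S_b and red tree S_r, the tree S_b contains a cross-edge of weight at least w_× and the tree S_r contains a cross-edge of weight at least w_× (so the solution contains at least two cross-edges of weight at least w_×, one in each tree). -/

import Mathlib

/-!
Cut property: if `{a, b}` is an edge of a minimum spanning tree `T` and `u`, `v` lie on opposite
sides of `T - ab`, then `T - ab + uv` is again a spanning tree, so minimality of `T` forces
`w a b ≤ w u v`. Since the two ends of every pair get different colours, a pair inside `V_L`
puts a vertex of each colour into `V_L`, and likewise for `V_R`. Hence a path in either colour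
tree between its `V_L`-vertex and its `V_R`-vertex crosses the cut along an edge, which by the
cut property weighs at least `w_×`.
-/

open scoped Classical

noncomputable def cost {α : Type*} [Fintype α] (w : α → α → ℝ) (G : SimpleGraph α) : ℝ :=
  (∑ u : α, ∑ v : α, if G.Adj u v then w u v else 0) / 2

/-- `G` is a minimum spanning tree for the weight function `w`. -/
def IsMST {α : Type*} [Fintype α] (w : α → α → ℝ) (G : SimpleGraph α) : Prop :=
  G.IsTree ∧ ∀ G' : SimpleGraph α, G'.IsTree → cost w G ≤ cost w G'

/-- Cost of a graph on the subtype of a subset `S`, w.r.t. the restricted weights. -/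
noncomputable def subCost {V : Type*} [Fintype V] (w : V → V → ℝ) (S : Set V)
    (G : SimpleGraph S) : ℝ :=
  cost (fun u v : S => w u.1 v.1) G

/-- `G` is a minimum spanning tree of the subset `S` w.r.t. the restricted weights. -/
def IsSubMST {V : Type*} [Fintype V] (w : V → V → ℝ) (S : Set V) (G : SimpleGraph S) : Prop :=
  IsMST (fun u v : S => w u.1 v.1) G

open SimpleGraph

section Cost
variable {α : Type*} [Fintype α] (w : α → α → ℝ)

theorem cost_sup_of_disjoint {G H : SimpleGraph α} (h : Disjoint G H) :
    cost w (G ⊔ H) = cost w G + cost w H := by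
  simp only [cost, ← add_div, ← Finset.sum_add_distrib]
  congr 1
  refine Finset.sum_congr rfl fun u _ => Finset.sum_congr rfl fun v _ => ?_
  by_cases hG : G.Adj u v <;> by_cases hH : H.Adj u v
  · exact absurd (h.le_bot ⟨hG, hH⟩) id
  all_goals simp [hG, hH]

theorem cost_edge (hw : ∀ u v, w u v = w v u) {u v : α} (huv : u ≠ v) :
    cost w (edge u v) = w u v := by
  calc cost w (edge u v)
      = (∑ x, ∑ y, ((if x = u then if y = v then w u v else 0 else 0) +
          (if x = v then if y = u then w u v else 0 else 0))) / 2 := by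
        unfold cost
        congr 1
        refine Finset.sum_congr rfl fun x _ => Finset.sum_congr rfl fun y _ => ?_
        by_cases hxu : x = u <;> by_cases hxv : x = v <;> by_cases hyu : y = u <;>
          by_cases hyv : y = v <;> simp_all [edge_adj]
    _ = w u v := by simp [Finset.sum_add_distrib]

theorem cost_deleteEdges_add (hw : ∀ u v, w u v = w v u) {G : SimpleGraph α} {a b : α}
    (hab : G.Adj a b) : cost w (G.deleteEdges {s(a, b)}) + w a b = cost w G := by
  change cost w (G \ edge a b) + w a b = cost w G
  rw [← cost_edge w hw hab.ne, ← cost_sup_of_disjoint w disjoint_sdiff_self_left]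
  exact congrArg (cost w) (sdiff_sup_cancel ((edge_le_iff G).mpr (Or.inr hab)))

end Cost

namespace SimpleGraph
variable {V : Type*} {G : SimpleGraph V}

theorem Preconnected.exists_adj_mem_not_mem (hG : G.Preconnected) {S : Set V} {x y : V}
    (hx : x ∈ S) (hy : y ∉ S) : ∃ u v, G.Adj u v ∧ u ∈ S ∧ v ∉ S := by
  obtain ⟨p⟩ := hG x y
  obtain ⟨d, -, hd⟩ := p.exists_boundary_dart S hx hy
  exact ⟨d.fst, d.snd, d.adj, hd⟩

theorem Connected.reachable_deleteEdges_or (hG : G.Connected) (a b x : V) :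
    (G.deleteEdges {s(a, b)}).Reachable a x ∨ (G.deleteEdges {s(a, b)}).Reachable b x := by
  set D := G.deleteEdges {s(a, b)}
  by_contra hx
  obtain ⟨y, z, hyz, hy, hz⟩ := hG.preconnected.exists_adj_mem_not_mem
    (S := {y | D.Reachable a y ∨ D.Reachable b y}) (Or.inl .rfl) hx
  by_cases he : s(y, z) = s(a, b)
  · rcases Sym2.eq_iff.mp he with ⟨-, rfl⟩ | ⟨-, rfl⟩
    · exact hz (Or.inr .rfl)
    · exact hz (Or.inl .rfl)
  · have hD : D.Adj y z := deleteEdges_adj.mpr ⟨hyz, he⟩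
    exact hz (hy.imp (·.trans hD.reachable) (·.trans hD.reachable))

theorem IsAcyclic.not_reachable_deleteEdges {T : SimpleGraph V} (hT : T.IsAcyclic) {a b u v : V}
    (hab : T.Adj a b) (hu : (T.deleteEdges {s(a, b)}).Reachable a u)
    (hv : (T.deleteEdges {s(a, b)}).Reachable b v) :
    ¬ (T.deleteEdges {s(a, b)}).Reachable u v := fun h =>
  isBridge_iff.mp (isAcyclic_iff_forall_adj_isBridge.mp hT hab) (hu.trans (h.trans hv.symm))

theorem IsTree.deleteEdges_sup_edge {T : SimpleGraph V} (hT : T.IsTree) {a b u v : V}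
    (hab : T.Adj a b) (hu : (T.deleteEdges {s(a, b)}).Reachable a u)
    (hv : (T.deleteEdges {s(a, b)}).Reachable b v) :
    (T.deleteEdges {s(a, b)} ⊔ edge u v).IsTree := by
  set D := T.deleteEdges {s(a, b)}
  have huv : ¬ D.Reachable u v := hT.isAcyclic.not_reachable_deleteEdges hab hu hv
  have hne : u ≠ v := fun h => huv (h ▸ .rfl)
  have hD : D ≤ D ⊔ edge u v := le_sup_left
  have hadj : (D ⊔ edge u v).Adj u v := Or.inr ((edge_adj u v u v).mpr ⟨Or.inl ⟨rfl, rfl⟩, hne⟩)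
  refine ⟨(connected_iff_exists_forall_reachable _).mpr ⟨u, fun x => ?_⟩,
    (hT.isAcyclic.anti (deleteEdges_le _)).sup_edge_of_not_reachable huv⟩
  rcases hT.connected.reachable_deleteEdges_or a b x with hx | hx
  · exact (hu.symm.trans hx).mono hD
  · exact hadj.reachable.trans ((hv.symm.trans hx).mono hD)

end SimpleGraph

theorem Set.inter_nonempty_and_compl_inter_nonempty {α : Type*} {B X : Set α} {p q : α}
    (hpq : p ∈ B ↔ q ∉ B) (hp : p ∈ X) (hq : q ∈ X) : (B ∩ X).Nonempty ∧ (Bᶜ ∩ X).Nonempty := by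
  by_cases hpB : p ∈ B
  · exact ⟨⟨p, hpB, hp⟩, q, hpq.mp hpB, hq⟩
  · exact ⟨⟨q, not_not.mp (mt hpq.mpr hpB), hq⟩, p, hpB, hp⟩

section CutProperty
variable {V : Type*} [Fintype V] {w : V → V → ℝ} {T : SimpleGraph V} {a b : V}

theorem IsMST.le_of_reachable_deleteEdges (hw : ∀ u v, w u v = w v u) (hT : IsMST w T)
    (hab : T.Adj a b) {u v : V} (hu : (T.deleteEdges {s(a, b)}).Reachable a u)
    (hv : (T.deleteEdges {s(a, b)}).Reachable b v) : w a b ≤ w u v := by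
  have huv := hT.1.isAcyclic.not_reachable_deleteEdges hab hu hv
  have hne : u ≠ v := fun h => huv (h ▸ .rfl)
  have hle := hT.2 _ (hT.1.deleteEdges_sup_edge hab hu hv)
  rw [cost_sup_of_disjoint w ((disjoint_edge _).mpr fun h => huv h.reachable), cost_edge w hw hne,
    ← cost_deleteEdges_add w hw hab] at hle
  linarith

theorem IsMST.exists_adj_crossing_le (hw : ∀ u v, w u v = w v u) (hT : IsMST w T)
    (hab : T.Adj a b) {S : Set V} {G : SimpleGraph S} (hG : G.Preconnected) {x y : S}
    (hx : (T.deleteEdges {s(a, b)}).Reachable a x) (hy : (T.deleteEdges {s(a, b)}).Reachable b y) :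
    ∃ u v : S, G.Adj u v ∧ (T.deleteEdges {s(a, b)}).Reachable a u ∧
      ¬ (T.deleteEdges {s(a, b)}).Reachable a v ∧ w a b ≤ w u v := by
  have hy' := hT.1.isAcyclic.not_reachable_deleteEdges hab .rfl hy
  obtain ⟨u, v, huv, hu, hv⟩ := hG.exists_adj_mem_not_mem
    (S := {z : S | (T.deleteEdges {s(a, b)}).Reachable a z}) hx hy'
  have hvb := (hT.1.connected.reachable_deleteEdges_or a b v).resolve_left hv
  exact ⟨u, v, huv, hu, hv, hT.le_of_reachable_deleteEdges hw hab hu hvb⟩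

end CutProperty

theorem stmt_8_general {V : Type*} [Fintype V]
    {n : ℕ}
    (p q : Fin n → V)
    (w : V → V → ℝ)
    (hw_symm : ∀ u v, w u v = w v u)
    (T : SimpleGraph V) (hT : IsMST w T)
    (vL vR : V) (hadj : T.Adj vL vR)
    (VL VR : Set V)
    (hVL : VL = {x | (T.deleteEdges {s(vL, vR)}).Reachable vL x})
    (hVR : VR = {x | (T.deleteEdges {s(vL, vR)}).Reachable vR x})
    (hLpair : ∃ i, p i ∈ VL ∧ q i ∈ VL) (hRpair : ∃ i, p i ∈ VR ∧ q i ∈ VR)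
    (B : Set V) (hfeas : (∀ i, (p i ∈ B ↔ q i ∉ B)))
    (Sb : SimpleGraph B) (Sr : SimpleGraph (Bᶜ : Set V))
    (hSb : Sb.IsTree) (hSr : Sr.IsTree) :
    (∃ u v : B, Sb.Adj u v ∧ ((u.1 ∈ VL ∧ v.1 ∉ VL) ∨ (u.1 ∉ VL ∧ v.1 ∈ VL)) ∧ w vL vR ≤ w u.1 v.1) ∧
    (∃ u v : (Bᶜ : Set V), Sr.Adj u v ∧ ((u.1 ∈ VL ∧ v.1 ∉ VL) ∨ (u.1 ∉ VL ∧ v.1 ∈ VL)) ∧ w vL vR ≤ w u.1 v.1) := by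
  subst hVL hVR
  obtain ⟨i, hpL, hqL⟩ := hLpair
  obtain ⟨j, hpR, hqR⟩ := hRpair
  obtain ⟨⟨xb, hxb, hxbL⟩, xr, hxr, hxrL⟩ :=
    Set.inter_nonempty_and_compl_inter_nonempty (hfeas i) hpL hqL
  obtain ⟨⟨yb, hyb, hybR⟩, yr, hyr, hyrR⟩ :=
    Set.inter_nonempty_and_compl_inter_nonempty (hfeas j) hpR hqR
  constructor
  · obtain ⟨u, v, huv, hu, hv, hle⟩ := hT.exists_adj_crossing_le hw_symm hadj
      hSb.connected.preconnected (x := ⟨xb, hxb⟩) (y := ⟨yb, hyb⟩) hxbL hybR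
    exact ⟨u, v, huv, Or.inl ⟨hu, hv⟩, hle⟩
  · obtain ⟨u, v, huv, hu, hv, hle⟩ := hT.exists_adj_crossing_le hw_symm hadj
      hSr.connected.preconnected (x := ⟨xr, hxr⟩) (y := ⟨yr, hyr⟩) hxrL hyrR
    exact ⟨u, v, huv, Or.inl ⟨hu, hv⟩, hle⟩

theorem stmt_8 {V : Type*} [Fintype V]
    {n : ℕ} (hn : 2 ≤ n)
    (p q : Fin n → V) (hpq : Function.Bijective (Sum.elim p q))
    (w : V → V → ℝ)
    (hw_self : ∀ v, w v v = 0)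
    (hw_symm : ∀ u v, w u v = w v u)
    (hw_nonneg : ∀ u v, 0 ≤ w u v)
    (hw_tri : ∀ u v x, w u v ≤ w u x + w x v)
    (T : SimpleGraph V) (hT : IsMST w T)
    (vL vR : V) (hadj : T.Adj vL vR)
    (hmax : ∀ a b, T.Adj a b → w a b ≤ w vL vR)
    (VL VR : Set V)
    (hVL : VL = {x | (T.deleteEdges {s(vL, vR)}).Reachable vL x})
    (hVR : VR = {x | (T.deleteEdges {s(vL, vR)}).Reachable vR x})
    (hLpair : ∃ i, p i ∈ VL ∧ q i ∈ VL) (hRpair : ∃ i, p i ∈ VR ∧ q i ∈ VR)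
    (B : Set V) (hfeas : (∀ i, (p i ∈ B ↔ q i ∉ B)))
    (Sb : SimpleGraph B) (Sr : SimpleGraph (Bᶜ : Set V))
    (hSb : Sb.IsTree) (hSr : Sr.IsTree) :
    (∃ u v : B, Sb.Adj u v ∧ ((u.1 ∈ VL ∧ v.1 ∉ VL) ∨ (u.1 ∉ VL ∧ v.1 ∈ VL)) ∧ w vL vR ≤ w u.1 v.1) ∧
    (∃ u v : (Bᶜ : Set V), Sr.Adj u v ∧ ((u.1 ∈ VL ∧ v.1 ∉ VL) ∨ (u.1 ∉ VL ∧ v.1 ∈ VL)) ∧ w vL vR ≤ w u.1 v.1) :=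
  stmt_8_general p q w hw_symm T hT vL vR hadj VL VR hVL hVR hLpair hRpair B hfeas Sb Sr hSb hSr
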